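/- arXiv:1202.5915 — 6 statements merged into one kernel-verified Lean document; each statement's English description precedes it below -/
import Mathlib

section
/- For every f ∈ H and all λ, λ' > 0 the following identity holds: (λ + λ') · Re⟪u_λ, u_{λ'}⟫ = ‖S^{1/2}(u_λ - u_{λ'})‖² + λ‖u_λ‖² + λ'‖u_{λ'}‖². -/
open ContinuousLinearMap Filter Topology

/-!
Subtracting the two resolvent equations gives `λ u_λ - λ' u_{λ'} = G (u_λ - u_{λ'})`. Pair this
with `u_λ - u_{λ'}` and take real parts: the skew-adjoint part `A` contributes nothing, and
`-S = -(S^{1/2})²` contributes `-‖S^{1/2}(u_λ - u_{λ'})‖²`; expanding the left-hand side gives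
the identity.
-/

open RCLike

section

variable {𝕜 E : Type*} [RCLike 𝕜] [NormedAddCommGroup E] [InnerProductSpace 𝕜 E]

local notation "⟪" x ", " y "⟫" => inner 𝕜 x y

theorem re_inner_eq_of_smul_sub_apply_eq {G : E →L[𝕜] E} {T : E →L[𝕜] E}
    (hG : ∀ x, re ⟪x, G x⟫ = -‖T x‖ ^ 2) {l l' : ℝ} {u v f : E}
    (hu : (l : 𝕜) • u - G u = f) (hv : (l' : 𝕜) • v - G v = f) :
    (l + l') * re ⟪u, v⟫ = ‖T (u - v)‖ ^ 2 + l * ‖u‖ ^ 2 + l' * ‖v‖ ^ 2 := by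
  have hGuv : (l : 𝕜) • u - (l' : 𝕜) • v = G (u - v) := by
    rw [map_sub]
    exact sub_eq_sub_iff_sub_eq_sub.mp (hu.trans hv.symm)
  have key := congrArg re (congrArg (⟪u - v, ·⟫) hGuv)
  rw [hG] at key
  simp only [inner_sub_left, inner_sub_right, inner_smul_right, map_sub, re_ofReal_mul,
    inner_self_eq_norm_sq] at key
  rw [← map_sub T, inner_re_symm v u] at key
  linarith

variable [CompleteSpace E]

theorem ContinuousLinearMap.re_inner_apply_self_eq_zero_of_adjoint_eq_neg {A : E →L[𝕜] E}
    (hA : adjoint A = -A) (x : E) : re ⟪x, A x⟫ = 0 := by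
  have h : ⟪x, A x⟫ = -⟪A x, x⟫ := by
    rw [← adjoint_inner_left, hA, neg_apply, inner_neg_left]
  have hre := congrArg re h
  rw [map_neg, inner_re_symm (A x) x] at hre
  linarith

theorem IsSelfAdjoint.re_inner_mul_self_apply {T : E →L[𝕜] E} (hT : IsSelfAdjoint T) (x : E) :
    re ⟪x, (T * T) x⟫ = ‖T x‖ ^ 2 := by
  rw [apply_norm_sq_eq_inner_adjoint_right, hT.adjoint_eq]
  rfl

end

theorem ContinuousLinearMap.smul_sub_apply_ring_inverse_apply {𝕜 E : Type*}
    [NontriviallyNormedField 𝕜] [NormedAddCommGroup E] [NormedSpace 𝕜 E] {G : E →L[𝕜] E} {c : 𝕜}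
    (h : IsUnit (c • (1 : E →L[𝕜] E) - G)) (f : E) :
    c • Ring.inverse (c • 1 - G) f - G (Ring.inverse (c • 1 - G) f) = f :=
  congrArg (· f) (Ring.mul_inverse_cancel _ h)

theorem resolvent_identity_general
    {H : Type*} [NormedAddCommGroup H] [InnerProductSpace ℂ H] [CompleteSpace H]
    (S A : H →L[ℂ] H)
    (hA : ContinuousLinearMap.adjoint A = -A)
    -- `S^{1/2}`: the (unique) positive square root of `S`
    (sqrtS : H →L[ℂ] H) (hsqrtS_pos : sqrtS.IsPositive) (hsqrtS_sq : sqrtS * sqrtS = S)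
    -- the resolvent `(λ I - G)⁻¹` of `G = -S + A` exists for `λ > 0`
    (hres : ∀ l : ℝ, 0 < l → IsUnit ((l : ℂ) • (1 : H →L[ℂ] H) - (-S + A)))
    (f : H) (l l' : ℝ) (hl : 0 < l) (hl' : 0 < l') :
    (l + l') * (inner ℂ ((Ring.inverse ((l : ℂ) • (1 : H →L[ℂ] H) - (-S + A))) f)
        ((Ring.inverse ((l' : ℂ) • (1 : H →L[ℂ] H) - (-S + A))) f) : ℂ).re =
      ‖sqrtS ((Ring.inverse ((l : ℂ) • (1 : H →L[ℂ] H) - (-S + A))) f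
          - (Ring.inverse ((l' : ℂ) • (1 : H →L[ℂ] H) - (-S + A))) f)‖ ^ 2
      + l * ‖(Ring.inverse ((l : ℂ) • (1 : H →L[ℂ] H) - (-S + A))) f‖ ^ 2
      + l' * ‖(Ring.inverse ((l' : ℂ) • (1 : H →L[ℂ] H) - (-S + A))) f‖ ^ 2 := by
  have hG (x : H) : re (inner ℂ x ((-S + A) x)) = -‖sqrtS x‖ ^ 2 := by
    rw [add_apply, neg_apply, inner_add_right, inner_neg_right, map_add, map_neg,
      ← hsqrtS_sq, hsqrtS_pos.isSelfAdjoint.re_inner_mul_self_apply,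
      re_inner_apply_self_eq_zero_of_adjoint_eq_neg hA, add_zero]
  exact re_inner_eq_of_smul_sub_apply_eq hG (smul_sub_apply_ring_inverse_apply (hres l hl) f)
    (smul_sub_apply_ring_inverse_apply (hres l' hl') f)

/-- The resolvent identity
`(λ + λ') Re⟪u_λ, u_{λ'}⟫ = ‖S^{1/2}(u_λ - u_{λ'})‖² + λ‖u_λ‖² + λ'‖u_{λ'}‖²`
where `u_λ = (λI - G)⁻¹ f`, `G = -S + A`. -/
theorem resolvent_identity
    {H : Type*} [NormedAddCommGroup H] [InnerProductSpace ℂ H] [CompleteSpace H]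
    (S A : H →L[ℂ] H)
    (hS : S.IsPositive)
    (hA : ContinuousLinearMap.adjoint A = -A)
    -- `S^{1/2}`: the (unique) positive square root of `S`
    (sqrtS : H →L[ℂ] H) (hsqrtS_pos : sqrtS.IsPositive) (hsqrtS_sq : sqrtS * sqrtS = S)
    -- the resolvent `(λ I - G)⁻¹` of `G = -S + A` exists for `λ > 0`
    (hres : ∀ l : ℝ, 0 < l → IsUnit ((l : ℂ) • (1 : H →L[ℂ] H) - (-S + A)))
    (f : H) (l l' : ℝ) (hl : 0 < l) (hl' : 0 < l') :
    (l + l') * (inner ℂ ((Ring.inverse ((l : ℂ) • (1 : H →L[ℂ] H) - (-S + A))) f)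
        ((Ring.inverse ((l' : ℂ) • (1 : H →L[ℂ] H) - (-S + A))) f) : ℂ).re =
      ‖sqrtS ((Ring.inverse ((l : ℂ) • (1 : H →L[ℂ] H) - (-S + A))) f
          - (Ring.inverse ((l' : ℂ) • (1 : H →L[ℂ] H) - (-S + A))) f)‖ ^ 2
      + l * ‖(Ring.inverse ((l : ℂ) • (1 : H →L[ℂ] H) - (-S + A))) f‖ ^ 2
      + l' * ‖(Ring.inverse ((l' : ℂ) • (1 : H →L[ℂ] H) - (-S + A))) f‖ ^ 2 :=
  resolvent_identity_general S A hA sqrtS hsqrtS_pos hsqrtS_sq hres f l l' hl hl'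
end

section
/- For every λ > 0, the operator I - B_λ is invertible and the resolvent of G factorizes as (λI - G)⁻¹ = (λI + S)^{-1/2} (I - B_λ)⁻¹ (λI + S)^{-1/2}. -/
open ContinuousLinearMap Filter Topology
open scoped Ring

/-!
Write `u = (λI + S)^{1/2}` and `B = u⁻¹ A u⁻¹`. Since `u` is self-adjoint and `A` skew-adjoint,
`B` is skew-adjoint, so its spectrum lies on the imaginary axis and `I - B` is invertible.
The identity `u (I - B) u = u² - A = λI + S - A = λI - G` then inverts factor by factor.
-/

section SkewAdjoint

variable {A : Type*} [CStarAlgebra A] {a : A}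

theorem re_eq_zero_of_mem_spectrum_of_mem_skewAdjoint (ha : a ∈ skewAdjoint A) {z : ℂ}
    (hz : z ∈ spectrum ℂ a) : z.re = 0 := by
  have hIa : IsSelfAdjoint (Complex.I • a) :=
    isSelfAdjoint_smul_of_mem_skewAdjoint (skewAdjoint.mem_iff.2 Complex.conj_I) ha
  have hIz : Complex.I * z ∈ spectrum ℂ (Complex.I • a) :=
    spectrum.smul_mem_smul_iff (r := Units.mk0 Complex.I Complex.I_ne_zero).2 hz
  simpa using hIa.im_eq_zero_of_mem_spectrum hIz

theorem isUnit_one_sub_of_mem_skewAdjoint (ha : a ∈ skewAdjoint A) : IsUnit (1 - a) := by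
  by_contra h
  have h1 : (1 : ℂ) ∈ spectrum ℂ a := by
    rwa [spectrum.mem_iff, map_one]
  simpa using re_eq_zero_of_mem_spectrum_of_mem_skewAdjoint ha h1

end SkewAdjoint

theorem IsUnit.mul_one_sub_inverse_mul_mul_inverse_mul {R : Type*} [Ring R] {u : R}
    (hu : IsUnit u) (a : R) : u * (1 - u⁻¹ʳ * a * u⁻¹ʳ) * u = u * u - a := by
  simp only [mul_sub, sub_mul, mul_one, ← mul_assoc, Ring.mul_inverse_cancel u hu, one_mul,
    Ring.inverse_mul_cancel_right u _ hu]

theorem resolvent_factorization_general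
    {H : Type*} [NormedAddCommGroup H] [InnerProductSpace ℂ H] [CompleteSpace H]
    (S A : H →L[ℂ] H)
    (hA : ContinuousLinearMap.adjoint A = -A)
    -- `sq l = (l I + S)^{1/2}`: the positive square root of `l I + S`, invertible for `l > 0`
    (sq : ℝ → H →L[ℂ] H)
    (hsq_pos : ∀ l : ℝ, 0 < l → (sq l).IsPositive)
    (hsq_sq : ∀ l : ℝ, 0 < l → sq l * sq l = (l : ℂ) • (1 : H →L[ℂ] H) + S)
    (hsq_unit : ∀ l : ℝ, 0 < l → IsUnit (sq l))
    (l : ℝ) (hl : 0 < l) :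
    IsUnit (1 - Ring.inverse (sq l) * A * Ring.inverse (sq l)) ∧
    Ring.inverse ((l : ℂ) • (1 : H →L[ℂ] H) - (-S + A)) =
      Ring.inverse (sq l) *
        Ring.inverse (1 - Ring.inverse (sq l) * A * Ring.inverse (sq l)) *
        Ring.inverse (sq l) := by
  set u := sq l
  have hu : IsUnit u := hsq_unit l hl
  have hB : u⁻¹ʳ * A * u⁻¹ʳ ∈ skewAdjoint (H →L[ℂ] H) := by
    have hA' : A ∈ skewAdjoint (H →L[ℂ] H) := skewAdjoint.mem_iff.2 (by rw [star_eq_adjoint, hA])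
    have hu_inv : IsSelfAdjoint u⁻¹ʳ := (hsq_pos l hl).isSelfAdjoint.ringInverse
    simpa only [hu_inv.star_eq] using skewAdjoint.conjugate hA' u⁻¹ʳ
  have hfactor : (l : ℂ) • (1 : H →L[ℂ] H) - (-S + A) = u * (1 - u⁻¹ʳ * A * u⁻¹ʳ) * u := by
    rw [hu.mul_one_sub_inverse_mul_mul_inverse_mul, hsq_sq l hl]
    abel
  refine ⟨isUnit_one_sub_of_mem_skewAdjoint hB, ?_⟩
  rw [hfactor, Ring.inverse_mul (.inr hu), Ring.inverse_mul (.inl hu), ← mul_assoc]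

/-- The resolvent factorization
`(λI - G)⁻¹ = (λI + S)^{-1/2} (I - B_λ)⁻¹ (λI + S)^{-1/2}`, where `G = -S + A` and
`B_λ = (λI+S)^{-1/2} A (λI+S)^{-1/2}`; in particular `I - B_λ` is invertible. -/
theorem resolvent_factorization
    {H : Type*} [NormedAddCommGroup H] [InnerProductSpace ℂ H] [CompleteSpace H]
    (S A : H →L[ℂ] H)
    (hS : S.IsPositive)
    (hA : ContinuousLinearMap.adjoint A = -A)
    -- `sq l = (l I + S)^{1/2}`: the positive square root of `l I + S`, invertible for `l > 0`
    (sq : ℝ → H →L[ℂ] H)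
    (hsq_pos : ∀ l : ℝ, 0 < l → (sq l).IsPositive)
    (hsq_sq : ∀ l : ℝ, 0 < l → sq l * sq l = (l : ℂ) • (1 : H →L[ℂ] H) + S)
    (hsq_unit : ∀ l : ℝ, 0 < l → IsUnit (sq l))
    -- the resolvent `(λ I - G)⁻¹` of `G = -S + A` exists for `λ > 0`
    (hres : ∀ l : ℝ, 0 < l → IsUnit ((l : ℂ) • (1 : H →L[ℂ] H) - (-S + A)))
    (l : ℝ) (hl : 0 < l) :
    IsUnit (1 - Ring.inverse (sq l) * A * Ring.inverse (sq l)) ∧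
    Ring.inverse ((l : ℂ) • (1 : H →L[ℂ] H) - (-S + A)) =
      Ring.inverse (sq l) *
        Ring.inverse (1 - Ring.inverse (sq l) * A * Ring.inverse (sq l)) *
        Ring.inverse (sq l) :=
  resolvent_factorization_general S A hA sq hsq_pos hsq_sq hsq_unit l hl
end

section
/- Suppose B : H → H is a bounded operator such that A = S^{1/2} B S^{1/2}. Then for every λ > 0, B_λ = S^{1/2}(λI + S)^{-1/2} · B · S^{1/2}(λI + S)^{-1/2}, and B_λ → B in the strong operator topology as λ → 0⁺, i.e., B_λ x → B x for every x ∈ H. -/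
/-!
Put `f_λ(t) = √(t / (λ + t))` and `C_λ = S^{1/2} (λ + S)^{-1/2} = f_λ(S)`. All operators involved
are functions of `S`, so they commute and `B_λ = C_λ B C_λ`. On `t ≥ 0` we have `0 ≤ f_λ ≤ 1` and
`|(f_λ(t) - 1) t| ≤ λ`, since `1 - √u ≤ 1 - u` for `u ∈ [0, 1]`; hence `‖C_λ‖ ≤ 1` and
`‖(C_λ - 1) S‖ ≤ λ`. So `C_λ → 1` strongly on the range of `S`, which is dense because `S` is
self-adjoint and injective, and then everywhere by the uniform bound. A uniformly bounded,
strongly convergent family composes with a convergent family of vectors, so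
`C_λ B C_λ x → B x`.
-/

open ContinuousLinearMap Filter Topology

lemma sqrt_div_add_le_one {l t : ℝ} (hl : 0 ≤ l) (ht : 0 ≤ t) : √(t / (l + t)) ≤ 1 :=
  Real.sqrt_le_one.mpr (div_le_one_of_le₀ (by linarith) (by linarith))

lemma abs_sqrt_div_add_sub_one_mul_le {l t : ℝ} (hl : 0 ≤ l) (ht : 0 ≤ t) :
    |(√(t / (l + t)) - 1) * t| ≤ l := by
  rcases (add_nonneg hl ht).eq_or_lt with hlt | hlt
  · have : t = 0 := by linarith
    simp [this, hl]
  have hu0 : 0 ≤ t / (l + t) := by positivity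
  have hu1 : t / (l + t) ≤ 1 := div_le_one_of_le₀ (by linarith) hlt.le
  have hsqrt : t / (l + t) ≤ √(t / (l + t)) := Real.le_sqrt_of_sq_le (by nlinarith)
  have hkey : (1 - t / (l + t)) * t = l * (t / (l + t)) := by field_simp; ring
  rw [abs_of_nonpos (mul_nonpos_of_nonpos_of_nonneg (by linarith [sqrt_div_add_le_one hl ht]) ht)]
  nlinarith [sqrt_div_add_le_one hl ht]

section CStarAlgebra

variable {A : Type*} [CStarAlgebra A] [PartialOrder A] [StarOrderedRing A] {a b c : A} {l : ℝ}

lemma eq_cfc_sqrt_comp_of_mul_self_eq_cfc {g : ℝ → ℝ} (hg : ContinuousOn g (spectrum ℝ a))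
    (hg0 : ∀ t ∈ spectrum ℝ a, 0 ≤ g t) (hb : 0 ≤ b) (hbb : b * b = cfc g a) :
    b = cfc (fun t ↦ √(g t)) a := by
  have hsqrt : cfc (fun t ↦ √(g t)) a * cfc (fun t ↦ √(g t)) a = cfc g a := by
    rw [← cfc_mul .., cfc_congr fun t ht ↦ Real.mul_self_sqrt (hg0 t ht)]
  rw [← CFC.sqrt_unique hbb, CFC.sqrt_unique hsqrt (cfc_nonneg fun t _ ↦ Real.sqrt_nonneg _)]

lemma eq_cfc_sqrt_of_mul_self_eq (ha : 0 ≤ a) (hb : 0 ≤ b) (hbb : b * b = a) :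
    b = cfc Real.sqrt a :=
  eq_cfc_sqrt_comp_of_mul_self_eq_cfc (g := id) continuousOn_id
    (fun t ht ↦ spectrum_nonneg_of_nonneg ha ht) hb (by rwa [cfc_id ℝ a])

lemma ringInverse_eq_cfc_inv_sqrt_add (ha : 0 ≤ a) (hl : 0 < l) (hc : 0 ≤ c)
    (hcc : c * c = (l : ℂ) • 1 + a) :
    Ring.inverse c = cfc (fun t ↦ (√(l + t))⁻¹) a := by
  have hpos : ∀ t ∈ spectrum ℝ a, 0 < l + t :=
    fun t ht ↦ by linarith [spectrum_nonneg_of_nonneg ha ht]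
  have hc_eq : c = cfc (fun t ↦ √(l + t)) a := by
    refine eq_cfc_sqrt_comp_of_mul_self_eq_cfc (g := fun t ↦ l + t) (by fun_prop)
      (fun t ht ↦ (hpos t ht).le) hc ?_
    rw [hcc, cfc_const_add l (fun t ↦ t) a, cfc_id' ℝ a, Algebra.algebraMap_eq_smul_one,
      Complex.coe_smul]
  rw [hc_eq, cfc_inv _ _ fun t ht ↦ (Real.sqrt_pos.mpr (hpos t ht)).ne']

lemma commute_ringInverse_of_mul_self_eq (ha : 0 ≤ a) (hl : 0 < l) (hb : 0 ≤ b)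
    (hbb : b * b = a) (hc : 0 ≤ c) (hcc : c * c = (l : ℂ) • 1 + a) :
    Commute b (Ring.inverse c) := by
  rw [eq_cfc_sqrt_of_mul_self_eq ha hb hbb, ringInverse_eq_cfc_inv_sqrt_add ha hl hc hcc]
  exact cfc_commute_cfc _ _ a

lemma mul_ringInverse_eq_cfc_sqrt_div_add (ha : 0 ≤ a) (hl : 0 < l)
    (hb : 0 ≤ b) (hbb : b * b = a) (hc : 0 ≤ c) (hcc : c * c = (l : ℂ) • 1 + a) :
    b * Ring.inverse c = cfc (fun t : ℝ ↦ √(t / (l + t))) a := by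
  have hpos : ∀ t ∈ spectrum ℝ a, 0 < l + t :=
    fun t ht ↦ by linarith [spectrum_nonneg_of_nonneg ha ht]
  have hcont : ContinuousOn (fun t : ℝ ↦ (√(l + t))⁻¹) (spectrum ℝ a) :=
    ContinuousOn.inv₀ (by fun_prop) fun t ht ↦ (Real.sqrt_pos.mpr (hpos t ht)).ne'
  rw [eq_cfc_sqrt_of_mul_self_eq ha hb hbb, ringInverse_eq_cfc_inv_sqrt_add ha hl hc hcc,
    ← cfc_mul ..]
  exact cfc_congr fun t ht ↦ by rw [Real.sqrt_div' t (hpos t ht).le, div_eq_mul_inv]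

lemma norm_cfc_sqrt_div_add_le_one (ha : 0 ≤ a) (hl : 0 ≤ l) :
    ‖cfc (fun t : ℝ ↦ √(t / (l + t))) a‖ ≤ 1 :=
  norm_cfc_le zero_le_one fun t ht ↦ by
    rw [Real.norm_of_nonneg (Real.sqrt_nonneg _)]
    exact sqrt_div_add_le_one hl (spectrum_nonneg_of_nonneg ha ht)

lemma norm_cfc_sqrt_div_add_sub_one_mul_le (ha : 0 ≤ a) (hl : 0 < l) :
    ‖(cfc (fun t : ℝ ↦ √(t / (l + t))) a - 1) * a‖ ≤ l := by
  have hcont : ContinuousOn (fun t : ℝ ↦ √(t / (l + t))) (spectrum ℝ a) :=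
    (continuousOn_id.div (by fun_prop) fun t ht ↦
      (by linarith [spectrum_nonneg_of_nonneg ha ht] : l + t ≠ 0)).sqrt
  have : (cfc (fun t : ℝ ↦ √(t / (l + t))) a - 1) * a =
      cfc (fun t : ℝ ↦ (√(t / (l + t)) - 1) * t) a := by
    rw [cfc_mul (fun t : ℝ ↦ √(t / (l + t)) - 1) (fun t ↦ t) a, cfc_sub .., cfc_const_one ℝ a,
      cfc_id' ℝ a]
  rw [this]
  exact norm_cfc_le hl.le fun t ht ↦
    abs_sqrt_div_add_sub_one_mul_le hl.le (spectrum_nonneg_of_nonneg ha ht)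

end CStarAlgebra

section Normed

variable {ι 𝕜 E F : Type*} [NontriviallyNormedField 𝕜] [SeminormedAddCommGroup E]
  [NormedSpace 𝕜 E] [SeminormedAddCommGroup F] [NormedSpace 𝕜 F]
  {l : Filter ι} {T : ι → E →L[𝕜] F} {C : ℝ}

theorem tendsto_apply_zero_of_dense (hT : ∀ᶠ i in l, ‖T i‖ ≤ C) {s : Set E} (hs : Dense s)
    (h : ∀ y ∈ s, Tendsto (fun i ↦ T i y) l (𝓝 0)) (x : E) :
    Tendsto (fun i ↦ T i x) l (𝓝 0) := by
  rw [Metric.tendsto_nhds]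
  intro ε hε
  have hδ : 0 < ε / (2 * (|C| + 1)) := by positivity
  obtain ⟨y, hxy, hys⟩ := Metric.dense_iff.mp hs x _ hδ
  rw [Metric.mem_ball, dist_eq_norm'] at hxy
  filter_upwards [hT, Metric.tendsto_nhds.mp (h y hys) (ε / 2) (half_pos hε)] with i hTi hyi
  rw [dist_zero_right] at hyi ⊢
  have hCxy : C * ‖x - y‖ ≤ ε / 2 := by
    calc C * ‖x - y‖ ≤ (|C| + 1) * (ε / (2 * (|C| + 1))) := by
          gcongr
          · linarith [le_abs_self C]
      _ = ε / 2 := by field_simp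
  calc ‖T i x‖ = ‖T i (x - y) + T i y‖ := by rw [← map_add, sub_add_cancel]
    _ ≤ ‖T i‖ * ‖x - y‖ + ‖T i y‖ := (norm_add_le _ _).trans (by gcongr; exact le_opNorm _ _)
    _ ≤ C * ‖x - y‖ + ‖T i y‖ := by gcongr
    _ < ε := by linarith

theorem tendsto_apply_of_norm_le_of_tendsto (hT : ∀ᶠ i in l, ‖T i‖ ≤ C) {T₀ : E →L[𝕜] F}
    (hT₀ : ∀ y, Tendsto (fun i ↦ T i y) l (𝓝 (T₀ y))) {u : ι → E} {y : E}
    (hu : Tendsto u l (𝓝 y)) : Tendsto (fun i ↦ T i (u i)) l (𝓝 (T₀ y)) := by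
  have hsmall : Tendsto (fun i ↦ T i (u i - y)) l (𝓝 0) := by
    refine squeeze_zero_norm' ?_
      (by simpa using (tendsto_iff_norm_sub_tendsto_zero.mp hu).const_mul C)
    filter_upwards [hT] with i hTi
    exact (le_opNorm _ _).trans (by gcongr)
  simpa using hsmall.add (hT₀ y)

end Normed

lemma ContinuousLinearMap.denseRange_of_injective_adjoint {𝕜 E F : Type*} [RCLike 𝕜]
    [NormedAddCommGroup E] [InnerProductSpace 𝕜 E] [CompleteSpace E]
    [NormedAddCommGroup F] [InnerProductSpace 𝕜 F] [CompleteSpace F]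
    {T : E →L[𝕜] F} (h : Function.Injective (adjoint T)) : DenseRange T := by
  have : T.range.topologicalClosure = ⊤ := by
    rw [Submodule.topologicalClosure_eq_top_iff, orthogonal_range,
      LinearMap.ker_eq_bot_of_injective h]
  exact (Submodule.dense_iff_topologicalClosure_eq_top.mpr this : _)

theorem tendsto_cfc_sqrt_div_add_apply {H : Type*} [NormedAddCommGroup H]
    [InnerProductSpace ℂ H] [CompleteSpace H] {S : H →L[ℂ] H} (hS : 0 ≤ S)
    (hinj : Function.Injective S) (x : H) :
    Tendsto (fun l : ℝ ↦ cfc (fun t : ℝ ↦ √(t / (l + t))) S x) (𝓝[>] 0) (𝓝 x) := by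
  have hdense : DenseRange S :=
    denseRange_of_injective_adjoint (by rwa [(IsSelfAdjoint.of_nonneg hS).adjoint_eq])
  rw [← tendsto_sub_nhds_zero_iff]
  have hbound : ∀ᶠ l : ℝ in 𝓝[>] 0,
      ‖cfc (fun t : ℝ ↦ √(t / (l + t))) S - 1‖ ≤ 1 + ‖(1 : H →L[ℂ] H)‖ :=
    eventually_mem_nhdsWithin.mono fun l hl ↦ (norm_sub_le _ _).trans
      (by gcongr; exact norm_cfc_sqrt_div_add_le_one hS (le_of_lt hl))
  refine tendsto_apply_zero_of_dense hbound hdense ?_ x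
  rintro _ ⟨z, rfl⟩
  refine squeeze_zero_norm' ?_ <|
    ((continuous_mul_const ‖z‖).tendsto' 0 0 (zero_mul _)).mono_left nhdsWithin_le_nhds
  filter_upwards [eventually_mem_nhdsWithin] with l hl
  exact (le_opNorm ((cfc (fun t : ℝ ↦ √(t / (l + t))) S - 1) * S) z).trans
    (mul_le_mul_of_nonneg_right (norm_cfc_sqrt_div_add_sub_one_mul_le hS hl) (norm_nonneg z))

theorem Blambda_strong_convergence_general
    {H : Type*} [NormedAddCommGroup H] [InnerProductSpace ℂ H] [CompleteSpace H]
    (S A : H →L[ℂ] H)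
    (hS : S.IsPositive) (hSinj : Function.Injective S)
    -- `S^{1/2}`: the (unique) positive square root of `S`
    (sqrtS : H →L[ℂ] H) (hsqrtS_pos : sqrtS.IsPositive) (hsqrtS_sq : sqrtS * sqrtS = S)
    -- `sq l = (l I + S)^{1/2}`: the positive square root of `l I + S`, invertible for `l > 0`
    (sq : ℝ → H →L[ℂ] H)
    (hsq_pos : ∀ l : ℝ, 0 < l → (sq l).IsPositive)
    (hsq_sq : ∀ l : ℝ, 0 < l → sq l * sq l = (l : ℂ) • (1 : H →L[ℂ] H) + S)
    -- `B` bounded with `A = S^{1/2} B S^{1/2}`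
    (B : H →L[ℂ] H) (hB : A = sqrtS * B * sqrtS) :
    (∀ l : ℝ, 0 < l →
      Ring.inverse (sq l) * A * Ring.inverse (sq l) =
        (sqrtS * Ring.inverse (sq l)) * B * (sqrtS * Ring.inverse (sq l))) ∧
    (∀ x : H,
      Tendsto (fun l : ℝ => (Ring.inverse (sq l)) (A ((Ring.inverse (sq l)) x)))
        (𝓝[>] (0:ℝ)) (𝓝 (B x))) := by
  have hS0 : 0 ≤ S := (nonneg_iff_isPositive S).mpr hS
  have hsqrtS0 : 0 ≤ sqrtS := (nonneg_iff_isPositive _).mpr hsqrtS_pos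
  have hsq0 (l : ℝ) (hl : 0 < l) : 0 ≤ sq l := (nonneg_iff_isPositive _).mpr (hsq_pos l hl)
  have hfactor (l : ℝ) (hl : 0 < l) : Ring.inverse (sq l) * A * Ring.inverse (sq l) =
      (sqrtS * Ring.inverse (sq l)) * B * (sqrtS * Ring.inverse (sq l)) := by
    rw [hB]
    calc Ring.inverse (sq l) * (sqrtS * B * sqrtS) * Ring.inverse (sq l)
        = (Ring.inverse (sq l) * sqrtS) * B * (sqrtS * Ring.inverse (sq l)) := by
          simp only [mul_assoc]
      _ = _ := by
          rw [← (commute_ringInverse_of_mul_self_eq hS0 hl hsqrtS0 hsqrtS_sq (hsq0 l hl)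
            (hsq_sq l hl)).eq]
  refine ⟨hfactor, fun x ↦ ?_⟩
  have hCBC : Tendsto (fun l : ℝ ↦ cfc (fun t : ℝ ↦ √(t / (l + t))) S
      (B (cfc (fun t : ℝ ↦ √(t / (l + t))) S x))) (𝓝[>] 0) (𝓝 (B x)) :=
    tendsto_apply_of_norm_le_of_tendsto (T₀ := 1)
      (eventually_mem_nhdsWithin.mono fun l hl ↦ norm_cfc_sqrt_div_add_le_one hS0 (le_of_lt hl))
      (tendsto_cfc_sqrt_div_add_apply hS0 hSinj)
      ((B.continuous.tendsto x).comp (tendsto_cfc_sqrt_div_add_apply hS0 hSinj x))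
  refine hCBC.congr' ?_
  filter_upwards [eventually_mem_nhdsWithin] with l hl
  rw [← mul_ringInverse_eq_cfc_sqrt_div_add hS0 hl hsqrtS0 hsqrtS_sq (hsq0 l hl) (hsq_sq l hl)]
  exact (DFunLike.congr_fun (hfactor l hl) x).symm

/-- If `A = S^{1/2} B S^{1/2}` for a bounded `B`, then
`B_λ = S^{1/2}(λI+S)^{-1/2} · B · S^{1/2}(λI+S)^{-1/2}` for every `λ > 0`, and
`B_λ → B` in the strong operator topology as `λ → 0⁺`, where
`B_λ = (λI+S)^{-1/2} A (λI+S)^{-1/2}`. -/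
theorem Blambda_strong_convergence
    {H : Type*} [NormedAddCommGroup H] [InnerProductSpace ℂ H] [CompleteSpace H]
    (S A : H →L[ℂ] H)
    (hS : S.IsPositive) (hSinj : Function.Injective S)
    (hA : ContinuousLinearMap.adjoint A = -A)
    -- `S^{1/2}`: the (unique) positive square root of `S`
    (sqrtS : H →L[ℂ] H) (hsqrtS_pos : sqrtS.IsPositive) (hsqrtS_sq : sqrtS * sqrtS = S)
    -- `sq l = (l I + S)^{1/2}`: the positive square root of `l I + S`, invertible for `l > 0`
    (sq : ℝ → H →L[ℂ] H)
    (hsq_pos : ∀ l : ℝ, 0 < l → (sq l).IsPositive)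
    (hsq_sq : ∀ l : ℝ, 0 < l → sq l * sq l = (l : ℂ) • (1 : H →L[ℂ] H) + S)
    (hsq_unit : ∀ l : ℝ, 0 < l → IsUnit (sq l))
    -- `B` bounded with `A = S^{1/2} B S^{1/2}`
    (B : H →L[ℂ] H) (hB : A = sqrtS * B * sqrtS) :
    (∀ l : ℝ, 0 < l →
      Ring.inverse (sq l) * A * Ring.inverse (sq l) =
        (sqrtS * Ring.inverse (sq l)) * B * (sqrtS * Ring.inverse (sq l))) ∧
    (∀ x : H,
      Tendsto (fun l : ℝ => (Ring.inverse (sq l)) (A ((Ring.inverse (sq l)) x)))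
        (𝓝[>] (0:ℝ)) (𝓝 (B x))) :=
  Blambda_strong_convergence_general S A hS hSinj sqrtS hsqrtS_pos hsqrtS_sq sq hsq_pos hsq_sq B hB
end

section
/- Let C ≥ 0. The following are equivalent: (1) |⟪ψ, Aφ⟫|² ≤ C² · ⟪ψ, Sψ⟫ · ⟪φ, Sφ⟫ for all φ, ψ ∈ H; (2) there exists a bounded operator B : H → H with ‖B‖ ≤ C and A = S^{1/2} B S^{1/2}. (This expresses that the strong sector condition is equivalent to boundedness of S^{-1/2} A S^{-1/2} by C.) -/
open ContinuousLinearMap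

/-!
Write `T` for `S^{1/2}`, so that `⟪x, S x⟫ = ‖T x‖²` and the sector condition reads
`|⟪ψ, A φ⟫| ≤ C ‖T ψ‖ ‖T φ‖`. Since `T` is self-adjoint and injective, its range is dense, and a
bound `‖f x‖ ≤ M ‖T x‖` lets `f` factor as `g ∘ T` with `‖g‖ ≤ M` (extend `T x ↦ f x` from the
range by continuity). Testing against all `ψ` gives such a bound for `A`, so `A = A₁ T`; testing
`A₁†` against the dense range of `T` gives one for `A₁†`, so `A₁† = B' T` and `A = T B'† T`.
-/

section

variable {𝕜 E F G : Type*} [RCLike 𝕜]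

theorem ContinuousLinearMap.exists_eq_comp_of_norm_le_mul_norm
    [NormedAddCommGroup E] [NormedSpace 𝕜 E] [NormedAddCommGroup F] [NormedSpace 𝕜 F]
    [NormedAddCommGroup G] [NormedSpace 𝕜 G] [CompleteSpace G]
    {T : E →L[𝕜] F} (hT : DenseRange T) (f : E →L[𝕜] G) {M : ℝ} (hM : 0 ≤ M)
    (h : ∀ x, ‖f x‖ ≤ M * ‖T x‖) : ∃ g : F →L[𝕜] G, ‖g‖ ≤ M ∧ f = g ∘L T :=
  ⟨(f : E →ₗ[𝕜] G).extendOfNorm (T : E →ₗ[𝕜] F), LinearMap.opNorm_extendOfNorm_le hT hM h,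
    ext fun x ↦ (LinearMap.extendOfNorm_eq hT ⟨M, h⟩ x).symm⟩

variable [NormedAddCommGroup E] [InnerProductSpace 𝕜 E]

variable (𝕜) in
theorem DenseRange.norm_le_of_norm_inner_le {ι : Type*} {u : ι → E} (hu : DenseRange u) {v : E}
    {M : ℝ} (hM : 0 ≤ M) (h : ∀ i, ‖(inner 𝕜 v (u i) : 𝕜)‖ ≤ M * ‖u i‖) : ‖v‖ ≤ M := by
  have hbound (z : E) : ‖(inner 𝕜 v z : 𝕜)‖ ≤ M * ‖z‖ :=
    hu.induction_on z (isClosed_le (by fun_prop) (by fun_prop)) h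
  rw [← innerSL_apply_norm 𝕜 v]
  exact opNorm_le_bound _ hM hbound

variable [CompleteSpace E]

theorem IsSelfAdjoint.denseRange_of_injective {T : E →L[𝕜] E} (hT : IsSelfAdjoint T)
    (hinj : Function.Injective T) : DenseRange T := by
  have hclosure : T.range.topologicalClosure = ⊤ := by
    rw [Submodule.topologicalClosure_eq_top_iff, orthogonal_range, hT.adjoint_eq]
    exact LinearMap.ker_eq_bot.mpr hinj
  exact Submodule.dense_iff_topologicalClosure_eq_top.mpr hclosure

theorem IsSelfAdjoint.inner_map_left {T : E →L[𝕜] E} (hT : IsSelfAdjoint T) (x y : E) :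
    inner 𝕜 (T x) y = inner 𝕜 x (T y) :=
  hT.isSymmetric x y

theorem IsSelfAdjoint.reApplyInnerSelf_mul_self {T : E →L[𝕜] E} (hT : IsSelfAdjoint T) (x : E) :
    (T * T).reApplyInnerSelf x = ‖T x‖ ^ 2 := by
  rw [reApplyInnerSelf_apply, mul_apply_eq_comp, hT.inner_map_left, inner_self_eq_norm_sq]

theorem IsSelfAdjoint.norm_inner_mul_mul_apply_le {T : E →L[𝕜] E} (hT : IsSelfAdjoint T)
    (B : E →L[𝕜] E) (φ ψ : E) :
    ‖(inner 𝕜 ψ ((T * B * T) φ) : 𝕜)‖ ≤ ‖B‖ * ‖T ψ‖ * ‖T φ‖ := by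
  rw [mul_apply_eq_comp, mul_apply_eq_comp, ← hT.inner_map_left]
  calc ‖(inner 𝕜 (T ψ) (B (T φ)) : 𝕜)‖ ≤ ‖T ψ‖ * ‖B (T φ)‖ := norm_inner_le_norm _ _
    _ ≤ ‖T ψ‖ * (‖B‖ * ‖T φ‖) := by gcongr; exact B.le_opNorm _
    _ = ‖B‖ * ‖T ψ‖ * ‖T φ‖ := by ring

theorem IsSelfAdjoint.exists_eq_mul_mul_of_norm_inner_le {T : E →L[𝕜] E} (hT : IsSelfAdjoint T)
    (hTd : DenseRange T) (A : E →L[𝕜] E) {C : ℝ} (hC : 0 ≤ C)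
    (h : ∀ φ ψ, ‖(inner 𝕜 ψ (A φ) : 𝕜)‖ ≤ C * ‖T ψ‖ * ‖T φ‖) :
    ∃ B : E →L[𝕜] E, ‖B‖ ≤ C ∧ A = T * B * T := by
  have hA (φ : E) : ‖A φ‖ ≤ C * ‖T‖ * ‖T φ‖ := by
    refine denseRange_id.norm_le_of_norm_inner_le 𝕜 (by positivity) fun ψ ↦ ?_
    calc ‖(inner 𝕜 (A φ) ψ : 𝕜)‖ = ‖(inner 𝕜 ψ (A φ) : 𝕜)‖ := norm_inner_symm _ _
      _ ≤ C * ‖T ψ‖ * ‖T φ‖ := h φ ψ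
      _ ≤ C * (‖T‖ * ‖ψ‖) * ‖T φ‖ := by gcongr; exact T.le_opNorm ψ
      _ = C * ‖T‖ * ‖T φ‖ * ‖id ψ‖ := by simp only [id]; ring
  obtain ⟨A₁, -, rfl⟩ := exists_eq_comp_of_norm_le_mul_norm hTd A (by positivity) hA
  have hA₁ (ψ : E) : ‖adjoint A₁ ψ‖ ≤ C * ‖T ψ‖ := by
    refine hTd.norm_le_of_norm_inner_le 𝕜 (by positivity) fun φ ↦ ?_
    calc ‖(inner 𝕜 (adjoint A₁ ψ) (T φ) : 𝕜)‖ = ‖(inner 𝕜 ψ ((A₁ ∘L T) φ) : 𝕜)‖ := by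
          rw [adjoint_inner_left, comp_apply]
      _ ≤ C * ‖T ψ‖ * ‖T φ‖ := h φ ψ
  obtain ⟨B', hB', hA₁_eq⟩ := exists_eq_comp_of_norm_le_mul_norm hTd (adjoint A₁) hC hA₁
  refine ⟨adjoint B', by rwa [LinearIsometryEquiv.norm_map], ?_⟩
  rw [← adjoint_adjoint A₁, hA₁_eq, adjoint_comp, hT.adjoint_eq]
  rfl

end

theorem strong_sector_condition_iff_bounded_general
    {H : Type*} [NormedAddCommGroup H] [InnerProductSpace ℂ H] [CompleteSpace H]
    (S A : H →L[ℂ] H)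
    (hSinj : Function.Injective S)
    -- `S^{1/2}`: the (unique) positive square root of `S`
    (sqrtS : H →L[ℂ] H) (hsqrtS_pos : sqrtS.IsPositive) (hsqrtS_sq : sqrtS * sqrtS = S)
    (C : ℝ) (hC : 0 ≤ C) :
    (∀ φ ψ : H, ‖(inner ℂ ψ (A φ) : ℂ)‖ ^ 2 ≤
        C ^ 2 * S.reApplyInnerSelf ψ * S.reApplyInnerSelf φ)
    ↔
    (∃ B : H →L[ℂ] H, ‖B‖ ≤ C ∧ A = sqrtS * B * sqrtS) := by
  have hT : IsSelfAdjoint sqrtS := hsqrtS_pos.isSelfAdjoint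
  have hTd : DenseRange sqrtS := by
    refine hT.denseRange_of_injective (Function.Injective.of_comp (f := sqrtS) ?_)
    rwa [← hsqrtS_sq] at hSinj
  have hsector (φ ψ : H) : ‖(inner ℂ ψ (A φ) : ℂ)‖ ^ 2 ≤
      C ^ 2 * S.reApplyInnerSelf ψ * S.reApplyInnerSelf φ ↔
      ‖(inner ℂ ψ (A φ) : ℂ)‖ ≤ C * ‖sqrtS ψ‖ * ‖sqrtS φ‖ := by
    rw [← hsqrtS_sq, hT.reApplyInnerSelf_mul_self, hT.reApplyInnerSelf_mul_self,
      ← pow_le_pow_iff_left₀ (norm_nonneg _) (by positivity) two_ne_zero, mul_pow, mul_pow]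
  simp only [hsector]
  refine ⟨hT.exists_eq_mul_mul_of_norm_inner_le hTd A hC, ?_⟩
  rintro ⟨B, hB, rfl⟩ φ ψ
  calc _ ≤ ‖B‖ * ‖sqrtS ψ‖ * ‖sqrtS φ‖ := hT.norm_inner_mul_mul_apply_le B φ ψ
    _ ≤ C * ‖sqrtS ψ‖ * ‖sqrtS φ‖ := by gcongr

/-- The strong sector condition `|⟪ψ, Aφ⟫|² ≤ C² ⟪ψ, Sψ⟫ ⟪φ, Sφ⟫` is equivalent to the
existence of a bounded operator `B` with `‖B‖ ≤ C` and `A = S^{1/2} B S^{1/2}`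
(i.e. to `‖S^{-1/2} A S^{-1/2}‖ ≤ C`). -/
theorem strong_sector_condition_iff_bounded
    {H : Type*} [NormedAddCommGroup H] [InnerProductSpace ℂ H] [CompleteSpace H]
    (S A : H →L[ℂ] H)
    (hS : S.IsPositive) (hSinj : Function.Injective S)
    (hA : ContinuousLinearMap.adjoint A = -A)
    -- `S^{1/2}`: the (unique) positive square root of `S`
    (sqrtS : H →L[ℂ] H) (hsqrtS_pos : sqrtS.IsPositive) (hsqrtS_sq : sqrtS * sqrtS = S)
    (C : ℝ) (hC : 0 ≤ C) :
    (∀ φ ψ : H, ‖(inner ℂ ψ (A φ) : ℂ)‖ ^ 2 ≤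
        C ^ 2 * S.reApplyInnerSelf ψ * S.reApplyInnerSelf φ)
    ↔
    (∃ B : H →L[ℂ] H, ‖B‖ ≤ C ∧ A = sqrtS * B * sqrtS) :=
  strong_sector_condition_iff_bounded_general S A hSinj sqrtS hsqrtS_pos hsqrtS_sq C hC
end

section
/- Let (H_n)_{n≥1} be a family of complex Hilbert spaces and H := {(φ_n)_{n≥1} : φ_n ∈ H_n, Σ_n ‖φ_n‖² < ∞} their ℓ²-direct sum (lp-sum with exponent 2). Let r ∈ ℕ, r ≥ 1, and for each pair m, n ≥ 1 with |m - n| ≤ r let B_{m,n} : H_n → H_m be a bounded operator with (B_{m,n})* = -B_{n,m}. Let C̃ ⊆ H be the subspace of finitely supported elements, and define the linear map B : C̃ → H by (Bφ)_m = Σ_{n : |m-n| ≤ r} B_{m,n} φ_n (a finite sum in each coordinate, landing in H since φ is finitely supported). Assume there is a positive nondecreasing sequence (c_n)_{n≥1} with Σ_{n≥1} 1/c_n = ∞ such that ‖B_{m,n}‖ ≤ c_n for all m ≠ n with |m - n| ≤ r. Then both subspaces (I - B)C̃ = {φ - Bφ : φ ∈ C̃} and (I + B)C̃ = {φ + Bφ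 : φ ∈ C̃} are dense in H. (In particular, B is essentially skew self-adjoint on C̃.) -/
/-!
If `ψ` is orthogonal to `(I - B) C̃`, testing against `φ = single k x` and using
`B_{m,k}* = -B_{k,m}` gives `ψ = -Bψ` coordinatewise. Pair this with `ψ` on the coordinates
`k < N`: by skewness the blocks of `B` inside `{0, …, N-1}` contribute a purely imaginary
amount, so `∑_{k<N} ‖ψ_k‖²` is controlled by the coupling across `N` alone, which involves only
the window `[N - r, N + r)` and blocks of norm at most `c_{N+r}`:
`∑_{k<N} ‖ψ_k‖² ≤ 2r c_{N+r} ∑_{N-r ≤ j < N+r} ‖ψ_j‖²`.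
If `ψ ≠ 0` the left side is eventually at least `‖ψ‖²/2`, so `1/c_{N+r}` is dominated by the
window sums, which are summable because every coordinate lies in at most `2r` windows;
this contradicts `∑ 1/c_n = ∞`. The case `I + B` is the case `I - B` for `-B`.
-/

open Filter Finset
open scoped InnerProductSpace

lemma summable_sum_Ico_sub_add {a : ℕ → ℝ} (ha₀ : ∀ n, 0 ≤ a n) (ha : Summable a) (p q : ℕ) :
    Summable fun N => ∑ j ∈ Ico (N - p) (N + q), a j := by
  have hshift : ∀ i, Summable fun N => a (N - p + i) := fun i =>
    (summable_nat_add_iff p).1 <| by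
      simpa only [Nat.add_sub_cancel] using (summable_nat_add_iff i).2 ha
  refine .of_nonneg_of_le (fun N => sum_nonneg fun j _ => ha₀ j) (fun N => ?_)
    (summable_sum fun i (_ : i ∈ range (p + q)) => hshift i)
  rw [sum_Ico_eq_sum_range]
  exact sum_le_sum_of_subset_of_nonneg (range_subset_range.2 (by omega)) fun _ _ _ => ha₀ _

lemma summable_one_div_of_sum_range_le {a c t : ℕ → ℝ} {A : ℝ} (ha : HasSum a A) (hA : 0 < A)
    (hc : ∀ n, 0 < c n) (ht : Summable t) (r : ℕ)
    (hle : ∀ N, ∑ k ∈ range N, a k ≤ c (N + r) * t N) : Summable fun n => 1 / c n := by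
  have hlarge : ∀ᶠ N in atTop, A / 2 ≤ ∑ k ∈ range N, a k :=
    ha.tendsto_sum_nat.eventually (eventually_ge_nhds (half_lt_self hA))
  refine (summable_nat_add_iff r).1 <| (ht.mul_left (2 / A)).of_norm_bounded_eventually_nat <|
    hlarge.mono fun N hN => ?_
  have hcN := hc (N + r)
  rw [Real.norm_of_nonneg (by positivity), div_le_iff₀ hcN]
  calc (1 : ℝ) = 2 / A * (A / 2) := by field_simp
    _ ≤ 2 / A * (c (N + r) * t N) := by gcongr; exact hN.trans (hle N)
    _ = 2 / A * t N * c (N + r) := by ring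

lemma sum_Ico_mul_sum_Ico_le {x : ℕ → ℝ} (hx : ∀ n, 0 ≤ x n) {a b d : ℕ} (hab : a ≤ b)
    (hbd : b ≤ d) :
    (∑ i ∈ Ico a b, x i) * ∑ i ∈ Ico b d, x i ≤ (d - a : ℕ) * ∑ i ∈ Ico a d, x i ^ 2 :=
  calc (∑ i ∈ Ico a b, x i) * ∑ i ∈ Ico b d, x i
      ≤ (∑ i ∈ Ico a b, x i + ∑ i ∈ Ico b d, x i) ^ 2 := by
        nlinarith [sum_nonneg fun i (_ : i ∈ Ico a b) => hx i,
          sum_nonneg fun i (_ : i ∈ Ico b d) => hx i]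
    _ = (∑ i ∈ Ico a d, x i) ^ 2 := by rw [sum_Ico_consecutive _ hab hbd]
    _ ≤ (d - a : ℕ) * ∑ i ∈ Ico a d, x i ^ 2 := by
        rw [← Nat.card_Ico]; exact sq_sum_le_card_mul_sum_sq

section Skew

variable {ι : Type*} {G : ι → Type*} [∀ i, NormedAddCommGroup (G i)]
  [∀ i, InnerProductSpace ℂ (G i)] [∀ i, CompleteSpace (G i)]

lemma re_sum_sum_inner_eq_zero_of_adjoint_eq_neg (B : ∀ i j, G j →L[ℂ] G i)
    (hadj : ∀ i j, (B i j).adjoint = -B j i) (f : ∀ i, G i) (s : Finset ι) :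
    (∑ k ∈ s, ∑ m ∈ s, ⟪f k, B k m (f m)⟫_ℂ).re = 0 := by
  have hanti : ∀ k m, (⟪f k, B k m (f m)⟫_ℂ).re = -(⟪f m, B m k (f k)⟫_ℂ).re := fun k m => by
    rw [← ContinuousLinearMap.adjoint_inner_left, hadj, neg_apply, inner_neg_left,
      Complex.neg_re, ← inner_conj_symm, Complex.conj_re]
  set x := ∑ k ∈ s, ∑ m ∈ s, (⟪f k, B k m (f m)⟫_ℂ).re
  have hx : x = -x := calc
    x = ∑ k ∈ s, ∑ m ∈ s, -(⟪f m, B m k (f k)⟫_ℂ).re :=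
      sum_congr rfl fun k _ => sum_congr rfl fun m _ => hanti k m
    _ = -x := by rw [sum_comm]; simp only [sum_neg_distrib]; rfl
  simp only [Complex.re_sum]
  linarith

end Skew

section Band

variable {G : ℕ → Type*} [∀ n, NormedAddCommGroup (G n)] [∀ n, InnerProductSpace ℂ (G n)]
  {r : ℕ} {B : ∀ m n, G n →L[ℂ] G m}

lemma hasSum_band (hband : ∀ m n, r < Nat.dist m n → B m n = 0) (f : ∀ n, G n) (m : ℕ)
    {s : Finset ℕ} (hs : Icc (m - r) (m + r) ⊆ s) :
    HasSum (fun n => B m n (f n)) (∑ n ∈ s, B m n (f n)) :=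
  hasSum_sum_of_ne_finset_zero fun n hn => by
    have hn' : n ∉ Icc (m - r) (m + r) := fun h => hn (hs h)
    rw [hband m n (by simp only [mem_Icc, Nat.dist] at hn' ⊢; omega),
      zero_apply]

lemma summable_band (hband : ∀ m n, r < Nat.dist m n → B m n = 0) (f : ∀ n, G n) (m : ℕ) :
    Summable fun n => B m n (f n) :=
  (hasSum_band hband f m subset_rfl).summable

lemma norm_sum_sum_inner_band_le (hband : ∀ m n, r < Nat.dist m n → B m n = 0) {c : ℕ → ℝ}
    (hc_mono : Monotone c) (hnorm : ∀ m n, m ≠ n → ‖B m n‖ ≤ c n) (f : ∀ n, G n) (N : ℕ) :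
    ‖∑ k ∈ range N, ∑ m ∈ Ico N (N + r), ⟪f k, B k m (f m)⟫_ℂ‖ ≤
      c (N + r) * ((∑ k ∈ Ico (N - r) N, ‖f k‖) * ∑ m ∈ Ico N (N + r), ‖f m‖) := by
  have hfar : ∀ k ∈ range N, k ∉ Ico (N - r) N →
      ∑ m ∈ Ico N (N + r), ⟪f k, B k m (f m)⟫_ℂ = 0 := fun k hk hk' =>
    sum_eq_zero fun m hm => by
      simp only [mem_range, mem_Ico] at hk hk' hm
      rw [hband k m (by simp only [Nat.dist]; omega), zero_apply, inner_zero_right]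
  rw [← sum_subset (fun k hk => mem_range.2 (mem_Ico.1 hk).2) hfar, sum_mul_sum, mul_sum]
  refine (norm_sum_le _ _).trans (sum_le_sum fun k hk => ?_)
  rw [mul_sum]
  refine (norm_sum_le _ _).trans (sum_le_sum fun m hm => ?_)
  simp only [mem_Ico] at hk hm
  calc ‖⟪f k, B k m (f m)⟫_ℂ‖ ≤ ‖f k‖ * (‖B k m‖ * ‖f m‖) :=
        (norm_inner_le_norm _ _).trans (by gcongr; exact (B k m).le_opNorm _)
    _ ≤ ‖f k‖ * (c (N + r) * ‖f m‖) := by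
        gcongr
        exact (hnorm k m (by omega)).trans (hc_mono (by omega))
    _ = c (N + r) * (‖f k‖ * ‖f m‖) := by ring

theorem sum_range_norm_sq_le_of_eq_neg_band [∀ n, CompleteSpace (G n)]
    (hband : ∀ m n, r < Nat.dist m n → B m n = 0)
    (hadj : ∀ m n, (B m n).adjoint = -B n m) {c : ℕ → ℝ} (hc₀ : ∀ n, 0 ≤ c n)
    (hc_mono : Monotone c) (hnorm : ∀ m n, m ≠ n → ‖B m n‖ ≤ c n) (f : ∀ n, G n)
    (hf : ∀ k, f k = -∑' m, B k m (f m)) (N : ℕ) :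
    ∑ k ∈ range N, ‖f k‖ ^ 2 ≤ c (N + r) * (2 * r * ∑ j ∈ Ico (N - r) (N + r), ‖f j‖ ^ 2) := by
  set E := ∑ k ∈ range N, ∑ m ∈ Ico N (N + r), ⟪f k, B k m (f m)⟫_ℂ
  have hsplit : ((∑ k ∈ range N, ‖f k‖ ^ 2 : ℝ) : ℂ) =
      -(∑ k ∈ range N, ∑ m ∈ range N, ⟪f k, B k m (f m)⟫_ℂ + E) := by
    push_cast
    rw [← sum_add_distrib, ← sum_neg_distrib]
    refine sum_congr rfl fun k hk => ?_
    have hk' : Icc (k - r) (k + r) ⊆ range (N + r) := fun m hm => by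
      simp only [mem_range, mem_Icc] at hk hm ⊢; omega
    rw [← Complex.coe_algebraMap, ← inner_self_eq_norm_sq_to_K]
    nth_rewrite 2 [hf k]
    rw [(hasSum_band hband f k hk').tsum_eq, inner_neg_right, inner_sum,
      sum_range_add_sum_Ico _ (by omega)]
  have hS : ∑ k ∈ range N, ‖f k‖ ^ 2 = -E.re := by
    simpa only [Complex.ofReal_re, Complex.neg_re, Complex.add_re,
      re_sum_sum_inner_eq_zero_of_adjoint_eq_neg B hadj f, zero_add] using
      congrArg Complex.re hsplit
  calc ∑ k ∈ range N, ‖f k‖ ^ 2 = -E.re := hS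
    _ ≤ ‖E‖ := (neg_le_abs E.re).trans (Complex.abs_re_le_norm E)
    _ ≤ c (N + r) * ((∑ k ∈ Ico (N - r) N, ‖f k‖) * ∑ m ∈ Ico N (N + r), ‖f m‖) :=
        norm_sum_sum_inner_band_le hband hc_mono hnorm f N
    _ ≤ c (N + r) * ((N + r - (N - r) : ℕ) * ∑ j ∈ Ico (N - r) (N + r), ‖f j‖ ^ 2) :=
        mul_le_mul_of_nonneg_left (sum_Ico_mul_sum_Ico_le (fun j => norm_nonneg (f j))
          (N.sub_le r) (N.le_add_right r)) (hc₀ _)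
    _ ≤ c (N + r) * (2 * r * ∑ j ∈ Ico (N - r) (N + r), ‖f j‖ ^ 2) := by
        gcongr
        · exact hc₀ _
        exact_mod_cast (by omega : N + r - (N - r) ≤ 2 * r)

variable (B) in
/-- The subspace `(I - B) C̃`. -/
def finSuppRangeOneSubBand (hband : ∀ m n, r < Nat.dist m n → B m n = 0) :
    Submodule ℂ (lp G 2) where
  carrier := {y | ∃ φ : lp G 2, {n | φ n ≠ 0}.Finite ∧ ∀ m, y m = φ m - ∑' n, B m n (φ n)}
  zero_mem' := ⟨0, by simp, fun m => by simp⟩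
  add_mem' := by
    rintro y y' ⟨φ, hφ, hy⟩ ⟨φ', hφ', hy'⟩
    refine ⟨φ + φ', (hφ.union hφ').subset fun n hn => ?_, fun m => ?_⟩
    · contrapose! hn
      simp_all
    · simp only [lp.coeFn_add, Pi.add_apply, map_add, hy, hy',
        (summable_band hband φ m).tsum_add (summable_band hband φ' m)]
      abel
  smul_mem' := by
    rintro z y ⟨φ, hφ, hy⟩
    refine ⟨z • φ, hφ.subset fun n hn => ?_, fun m => ?_⟩
    · contrapose! hn
      simp_all
    · simp only [lp.coeFn_smul, Pi.smul_apply, map_smul, hy,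
        (summable_band hband φ m).tsum_const_smul, smul_sub]

lemma memℓp_band_column (hband : ∀ m n, r < Nat.dist m n → B m n = 0) (k : ℕ) (x : G k)
    (p : ENNReal) : Memℓp (fun m => B m k x) p := by
  refine (memℓp_zero <| (Set.finite_Icc (k - r) (k + r)).subset fun m hm => ?_).of_exponent_ge
    zero_le
  by_contra hm'
  simp only [Set.mem_Icc] at hm'
  exact hm (by rw [hband m k (by simp only [Nat.dist]; omega), zero_apply])

lemma eq_neg_tsum_band_of_mem_orthogonal [∀ n, CompleteSpace (G n)]
    (hband : ∀ m n, r < Nat.dist m n → B m n = 0) (hadj : ∀ m n, (B m n).adjoint = -B n m)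
    {ψ : lp G 2} (hψ : ψ ∈ (finSuppRangeOneSubBand B hband)ᗮ) (k : ℕ) :
    ψ k = -∑' m, B k m (ψ m) := by
  have hmem : ∀ x : G k,
      lp.single 2 k x - ⟨fun m => B m k x, memℓp_band_column hband k x 2⟩ ∈
        finSuppRangeOneSubBand B hband := fun x =>
    ⟨lp.single 2 k x, (Set.finite_singleton k).subset fun n hn => by
      by_contra hnk; exact hn (lp.single_apply_ne 2 k x hnk), fun m => by
      rw [tsum_eq_single k fun n hn => by rw [lp.single_apply_ne 2 k x hn, map_zero],
        lp.single_apply_self]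
      rfl⟩
  have hcolumn : ∀ x : G k, ∑' m, ⟪B m k x, ψ m⟫_ℂ = -⟪x, ∑' m, B k m (ψ m)⟫_ℂ := fun x => by
    have hpull : ⟪x, ∑' m, B k m (ψ m)⟫_ℂ = ∑' m, ⟪x, B k m (ψ m)⟫_ℂ :=
      (innerSL ℂ x).map_tsum (summable_band hband (⇑ψ) k)
    rw [hpull, ← tsum_neg]
    refine tsum_congr fun m => ?_
    rw [← ContinuousLinearMap.adjoint_inner_right, hadj, neg_apply, inner_neg_right]
  have horth : ∀ x : G k, ⟪x, ψ k + ∑' m, B k m (ψ m)⟫_ℂ = 0 := fun x => by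
    have h := (Submodule.mem_orthogonal _ ψ).1 hψ _ (hmem x)
    rwa [inner_sub_left, lp.inner_single_left, lp.inner_eq_tsum, hcolumn, sub_neg_eq_add,
      ← inner_add_right] at h
  exact eq_neg_of_add_eq_zero_left (inner_self_eq_zero.1 (horth _))

theorem eq_zero_of_eq_neg_tsum_band [∀ n, CompleteSpace (G n)]
    (hband : ∀ m n, r < Nat.dist m n → B m n = 0) (hadj : ∀ m n, (B m n).adjoint = -B n m)
    {c : ℕ → ℝ} (hc_pos : ∀ n, 0 < c n) (hc_mono : Monotone c)
    (hc_div : ¬ Summable fun n => 1 / c n) (hnorm : ∀ m n, m ≠ n → ‖B m n‖ ≤ c n)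
    {ψ : lp G 2} (hψ : ∀ k, ψ k = -∑' m, B k m (ψ m)) : ψ = 0 := by
  by_contra hne
  have hsum : HasSum (fun k => ‖ψ k‖ ^ 2) (‖ψ‖ ^ 2) := by
    simpa using lp.hasSum_norm (by norm_num) ψ
  have hwindow : Summable fun N => 2 * r * ∑ j ∈ Ico (N - r) (N + r), ‖ψ j‖ ^ 2 :=
    (summable_sum_Ico_sub_add (fun _ => by positivity) hsum.summable r r).mul_left _
  exact hc_div <| summable_one_div_of_sum_range_le hsum (by positivity) hc_pos hwindow r
    (sum_range_norm_sq_le_of_eq_neg_band hband hadj (fun n => (hc_pos n).le) hc_mono hnorm ψ hψ)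

theorem dense_finSupp_sub_tsum_band [∀ n, CompleteSpace (G n)]
    (hband : ∀ m n, r < Nat.dist m n → B m n = 0) (hadj : ∀ m n, (B m n).adjoint = -B n m)
    {c : ℕ → ℝ} (hc_pos : ∀ n, 0 < c n) (hc_mono : Monotone c)
    (hc_div : ¬ Summable fun n => 1 / c n) (hnorm : ∀ m n, m ≠ n → ‖B m n‖ ≤ c n) :
    Dense {y : lp G 2 | ∃ φ : lp G 2, {n | φ n ≠ 0}.Finite ∧
      ∀ m, y m = φ m - ∑' n, B m n (φ n)} := by
  change Dense (finSuppRangeOneSubBand B hband : Set (lp G 2))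
  rw [Submodule.dense_iff_topologicalClosure_eq_top, Submodule.topologicalClosure_eq_top_iff,
    Submodule.eq_bot_iff]
  exact fun ψ hψ => eq_zero_of_eq_neg_tsum_band hband hadj hc_pos hc_mono hc_div hnorm
    (eq_neg_tsum_band_of_mem_orthogonal hband hadj hψ)

end Band

theorem graded_band_operator_ranges_dense_general
    (G : ℕ → Type*) [∀ n, NormedAddCommGroup (G n)] [∀ n, InnerProductSpace ℂ (G n)]
    [∀ n, CompleteSpace (G n)]
    (r : ℕ)
    (Bmn : ∀ m n : ℕ, G n →L[ℂ] G m)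
    -- band structure: `B_{m,n} = 0` for `|m - n| > r`
    (hband : ∀ m n : ℕ, r < Nat.dist m n → Bmn m n = 0)
    -- skew-adjointness of the blocks
    (hadj : ∀ m n : ℕ, ContinuousLinearMap.adjoint (Bmn m n) = -(Bmn n m))
    -- the sequence `(cₙ)`
    (c : ℕ → ℝ) (hc_pos : ∀ n, 0 < c n) (hc_mono : Monotone c)
    (hc_div : ¬ Summable (fun n => 1 / c n))
    -- off-diagonal norm bounds
    (hnorm : ∀ m n : ℕ, m ≠ n → ‖Bmn m n‖ ≤ c n) :
    Dense {y : lp G 2 | ∃ φ : lp G 2, {n | φ n ≠ 0}.Finite ∧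
        ∀ m, y m = φ m - ∑' n, Bmn m n (φ n)} ∧
    Dense {y : lp G 2 | ∃ φ : lp G 2, {n | φ n ≠ 0}.Finite ∧
        ∀ m, y m = φ m + ∑' n, Bmn m n (φ n)} := by
  refine ⟨dense_finSupp_sub_tsum_band hband hadj hc_pos hc_mono hc_div hnorm, ?_⟩
  have hneg := dense_finSupp_sub_tsum_band (B := fun m n => -Bmn m n)
    (fun m n h => by rw [hband m n h, neg_zero]) (fun m n => by rw [map_neg, hadj, neg_neg])
    hc_pos hc_mono hc_div (fun m n h => by simpa only [norm_neg] using hnorm m n h)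
  simpa only [neg_apply, tsum_neg, sub_neg_eq_add] using hneg

/-- Essential skew self-adjointness of a graded band operator (key step in the proof of
Proposition 1 of the paper).  On the ℓ²-direct sum `H = ⊕ₙ Hₙ`, let `B` be the band
operator of width `r` determined by bounded blocks `B_{m,n} : Hₙ → Hₘ` (vanishing for
`|m - n| > r`) with `(B_{m,n})* = -B_{n,m}`, defined on the subspace `C̃` of finitely
supported elements by `(Bφ)ₘ = Σₙ B_{m,n} φₙ`.  If `‖B_{m,n}‖ ≤ cₙ` for `m ≠ n`, where
`(cₙ)` is a positive nondecreasing sequence with `Σₙ 1/cₙ = ∞`, then `(I - B)C̃` and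
`(I + B)C̃` are both dense in `H`. -/
theorem graded_band_operator_ranges_dense
    (G : ℕ → Type*) [∀ n, NormedAddCommGroup (G n)] [∀ n, InnerProductSpace ℂ (G n)]
    [∀ n, CompleteSpace (G n)]
    (r : ℕ) (hr : 1 ≤ r)
    (Bmn : ∀ m n : ℕ, G n →L[ℂ] G m)
    -- band structure: `B_{m,n} = 0` for `|m - n| > r`
    (hband : ∀ m n : ℕ, r < Nat.dist m n → Bmn m n = 0)
    -- skew-adjointness of the blocks
    (hadj : ∀ m n : ℕ, ContinuousLinearMap.adjoint (Bmn m n) = -(Bmn n m))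
    -- the sequence `(cₙ)`
    (c : ℕ → ℝ) (hc_pos : ∀ n, 0 < c n) (hc_mono : Monotone c)
    (hc_div : ¬ Summable (fun n => 1 / c n))
    -- off-diagonal norm bounds
    (hnorm : ∀ m n : ℕ, m ≠ n → ‖Bmn m n‖ ≤ c n) :
    Dense {y : lp G 2 | ∃ φ : lp G 2, {n | φ n ≠ 0}.Finite ∧
        ∀ m, y m = φ m - ∑' n, Bmn m n (φ n)} ∧
    Dense {y : lp G 2 | ∃ φ : lp G 2, {n | φ n ≠ 0}.Finite ∧
        ∀ m, y m = φ m + ∑' n, Bmn m n (φ n)} :=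
  graded_band_operator_ranges_dense_general G r Bmn hband hadj c hc_pos hc_mono hc_div hnorm
end

section
/- Let f ∈ H and suppose that λ^{1/2}u_λ → 0 in H and S^{1/2}u_λ → v in H as λ → 0⁺, for some v ∈ H. Then lim_{λ→0⁺} Re⟪u_λ, f⟫ = ‖v‖². In particular, the limiting variance σ² := 2 lim_{λ→0⁺} Re⟪u_λ, f⟫ = 2‖v‖² exists and is a nonnegative real number. (Identification of the limiting variance in the Kipnis–Varadhan theorem; bounded-operator version.) -/
/-!
Write `u = u_λ`, so that `f = λ u + S u - A u`. Pairing with `u` and taking real parts kills the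
skew-adjoint term and turns `⟪u, S u⟫ = ⟪u, S^{1/2} S^{1/2} u⟫` into `‖S^{1/2} u‖²`, giving the
energy identity `Re⟪u_λ, f⟫ = ‖λ^{1/2} u_λ‖² + ‖S^{1/2} u_λ‖²`. The two hypotheses make the right
side converge to `0 + ‖v‖²`.
-/

open ContinuousLinearMap Filter Topology RCLike
open scoped InnerProductSpace

namespace ContinuousLinearMap

theorem apply_ringInverse_apply {R M : Type*} [Semiring R] [TopologicalSpace M]
    [AddCommMonoid M] [Module R M] {T : M →L[R] M} (hT : IsUnit T) (x : M) :
    T (Ring.inverse T x) = x := by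
  change (T * Ring.inverse T) x = x
  rw [Ring.mul_inverse_cancel T hT, one_apply_eq_self]

variable {𝕜 H : Type*} [RCLike 𝕜] [NormedAddCommGroup H] [InnerProductSpace 𝕜 H]
  [CompleteSpace H]

theorem re_inner_apply_eq_zero_of_adjoint_eq_neg {A : H →L[𝕜] H} (hA : adjoint A = -A) (x : H) :
    re ⟪x, A x⟫_𝕜 = 0 := by
  have h : ⟪x, A x⟫_𝕜 = -(starRingEnd 𝕜) ⟪x, A x⟫_𝕜 := by
    rw [inner_conj_symm, ← inner_neg_left, ← neg_apply, ← hA, adjoint_inner_left]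
  have h_re := congrArg re h
  rw [map_neg, conj_re] at h_re
  linarith

theorem _root_.IsSelfAdjoint.re_inner_mul_self_apply_s14 {R : H →L[𝕜] H} (hR : IsSelfAdjoint R)
    (x : H) : re ⟪x, (R * R) x⟫_𝕜 = ‖R x‖ ^ 2 := by
  rw [apply_norm_sq_eq_inner_adjoint_right, hR.adjoint_eq]
  rfl

theorem re_inner_eq_norm_sq_add_norm_sq_of_apply_eq {R S A : H →L[𝕜] H} (hR : IsSelfAdjoint R)
    (hRS : R * R = S) (hA : adjoint A = -A) {l : ℝ} {u f : H}
    (hu : ((l : 𝕜) • (1 : H →L[𝕜] H) - (-S + A)) u = f) :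
    re ⟪u, f⟫_𝕜 = l * ‖u‖ ^ 2 + ‖R u‖ ^ 2 := by
  rw [← hu, ← hRS]
  simp only [sub_apply, add_apply, neg_apply, smul_apply, one_apply_eq_self, inner_sub_right,
    inner_add_right, inner_neg_right, inner_smul_right, inner_self_eq_norm_sq_to_K, map_sub,
    map_add, map_neg, re_inner_apply_eq_zero_of_adjoint_eq_neg hA, hR.re_inner_mul_self_apply_s14]
  norm_cast
  simp

end ContinuousLinearMap

theorem limiting_variance_general
    {H : Type*} [NormedAddCommGroup H] [InnerProductSpace ℂ H] [CompleteSpace H]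
    (S A : H →L[ℂ] H)
    (hA : ContinuousLinearMap.adjoint A = -A)
    -- `S^{1/2}`: the (unique) positive square root of `S`
    (sqrtS : H →L[ℂ] H) (hsqrtS_pos : sqrtS.IsPositive) (hsqrtS_sq : sqrtS * sqrtS = S)
    -- the resolvent `(λ I - G)⁻¹` of `G = -S + A` exists for `λ > 0`
    (hres : ∀ l : ℝ, 0 < l → IsUnit ((l : ℂ) • (1 : H →L[ℂ] H) - (-S + A)))
    (f v : H)
    (hcondA : Tendsto (fun l : ℝ => ((Real.sqrt l : ℂ)) •
        (Ring.inverse ((l : ℂ) • (1 : H →L[ℂ] H) - (-S + A))) f)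
      (𝓝[>] (0:ℝ)) (𝓝 (0:H)))
    (hcondB : Tendsto (fun l : ℝ =>
        sqrtS ((Ring.inverse ((l : ℂ) • (1 : H →L[ℂ] H) - (-S + A))) f))
      (𝓝[>] (0:ℝ)) (𝓝 v)) :
    Tendsto (fun l : ℝ =>
        (inner ℂ ((Ring.inverse ((l : ℂ) • (1 : H →L[ℂ] H) - (-S + A))) f) f : ℂ).re)
      (𝓝[>] (0:ℝ)) (𝓝 (‖v‖ ^ 2)) ∧
    Tendsto (fun l : ℝ =>
        2 * (inner ℂ ((Ring.inverse ((l : ℂ) • (1 : H →L[ℂ] H) - (-S + A))) f) f : ℂ).re)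
      (𝓝[>] (0:ℝ)) (𝓝 (2 * ‖v‖ ^ 2)) ∧ 0 ≤ 2 * ‖v‖ ^ 2 := by
  set u : ℝ → H := fun l => Ring.inverse ((l : ℂ) • (1 : H →L[ℂ] H) - (-S + A)) f
  have energy : ∀ l : ℝ, 0 < l →
      ‖(Real.sqrt l : ℂ) • u l‖ ^ 2 + ‖sqrtS (u l)‖ ^ 2 = (inner ℂ (u l) f).re := by
    intro l hl
    rw [← re_to_complex, re_inner_eq_norm_sq_add_norm_sq_of_apply_eq (u := u l)
      hsqrtS_pos.isSelfAdjoint hsqrtS_sq hA (apply_ringInverse_apply (hres l hl) f), norm_smul,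
      mul_pow, Complex.norm_real, Real.norm_of_nonneg (Real.sqrt_nonneg l), Real.sq_sqrt hl.le]
  have hlim : Tendsto (fun l => (inner ℂ (u l) f).re) (𝓝[>] 0) (𝓝 (‖v‖ ^ 2)) := by
    have hsum := (hcondA.norm.pow 2).add (hcondB.norm.pow 2)
    rw [norm_zero, zero_pow two_ne_zero, zero_add] at hsum
    exact hsum.congr' (eventually_nhdsWithin_of_forall energy)
  exact ⟨hlim, hlim.const_mul 2, by positivity⟩

/-- Identification of the limiting variance in the Kipnis–Varadhan theorem
(bounded-operator version).  If `λ^{1/2} u_λ → 0` and `S^{1/2} u_λ → v` as `λ → 0⁺`,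
where `u_λ = (λI - G)⁻¹ f` and `G = -S + A`, then `Re⟪u_λ, f⟫ → ‖v‖²`; in particular
`σ² := 2 lim Re⟪u_λ, f⟫ = 2‖v‖²` exists and is nonnegative. -/
theorem limiting_variance
    {H : Type*} [NormedAddCommGroup H] [InnerProductSpace ℂ H] [CompleteSpace H]
    (S A : H →L[ℂ] H)
    (hS : S.IsPositive)
    (hA : ContinuousLinearMap.adjoint A = -A)
    -- `S^{1/2}`: the (unique) positive square root of `S`
    (sqrtS : H →L[ℂ] H) (hsqrtS_pos : sqrtS.IsPositive) (hsqrtS_sq : sqrtS * sqrtS = S)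
    -- the resolvent `(λ I - G)⁻¹` of `G = -S + A` exists for `λ > 0`
    (hres : ∀ l : ℝ, 0 < l → IsUnit ((l : ℂ) • (1 : H →L[ℂ] H) - (-S + A)))
    (f v : H)
    (hcondA : Tendsto (fun l : ℝ => ((Real.sqrt l : ℂ)) •
        (Ring.inverse ((l : ℂ) • (1 : H →L[ℂ] H) - (-S + A))) f)
      (𝓝[>] (0:ℝ)) (𝓝 (0:H)))
    (hcondB : Tendsto (fun l : ℝ =>
        sqrtS ((Ring.inverse ((l : ℂ) • (1 : H →L[ℂ] H) - (-S + A))) f))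
      (𝓝[>] (0:ℝ)) (𝓝 v)) :
    Tendsto (fun l : ℝ =>
        (inner ℂ ((Ring.inverse ((l : ℂ) • (1 : H →L[ℂ] H) - (-S + A))) f) f : ℂ).re)
      (𝓝[>] (0:ℝ)) (𝓝 (‖v‖ ^ 2)) ∧
    Tendsto (fun l : ℝ =>
        2 * (inner ℂ ((Ring.inverse ((l : ℂ) • (1 : H →L[ℂ] H) - (-S + A))) f) f : ℂ).re)
      (𝓝[>] (0:ℝ)) (𝓝 (2 * ‖v‖ ^ 2)) ∧ 0 ≤ 2 * ‖v‖ ^ 2 :=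
  limiting_variance_general S A hA sqrtS hsqrtS_pos hsqrtS_sq hres f v hcondA hcondB
end
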